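/- arXiv:1606.00782 — 11 statements merged into one kernel-verified Lean document; each statement's English description precedes it below -/
import Mathlib

section
/- A continuous surjection f: X → Y of digital images is shy if and only if for every connected subset Y' of Y, the preimage f⁻¹(Y') is connected in X. -/
/-- A subset `A` is connected under adjacency `κ` if any two of its points are
joined by a path within `A` whose consecutive points are `κ`-adjacent. -/
def DConn {X : Type*} (κ : X → X → Prop) (A : Set X) : Prop :=
  ∀ a ∈ A, ∀ b ∈ A,
    Relation.ReflTransGen (fun u v => κ u v ∧ u ∈ A ∧ v ∈ A) a b

/-- `f` is digitally continuous if images of connected sets are connected. -/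
def DCont {X Y : Type*} (κ : X → X → Prop) (lam : Y → Y → Prop) (f : X → Y) : Prop :=
  ∀ A : Set X, DConn κ A → DConn lam (f '' A)

/-- `f` is shy: a continuous surjection with connected point preimages and
connected preimages of adjacent pairs. -/
def DShy {X Y : Type*} (κ : X → X → Prop) (lam : Y → Y → Prop) (f : X → Y) : Prop :=
  DCont κ lam f ∧ Function.Surjective f ∧
    (∀ y : Y, DConn κ (f ⁻¹' {y})) ∧
    ∀ y₀ y₁ : Y, lam y₀ y₁ → DConn κ (f ⁻¹' {y₀, y₁})

/-! A path `y₀, …, yₙ` in `B` lifts to `f⁻¹' B`: by surjectivity pick a point over each `yᵢ`, and join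
consecutive ones inside the connected set `f⁻¹' {yᵢ, yᵢ₊₁}`. Conversely, singletons and adjacent
pairs are themselves connected. -/

section Digital

variable {X Y : Type*} {κ : X → X → Prop} {lam : Y → Y → Prop}

theorem reflTransGen_restrict_mono {A A' : Set X} (hAA' : A ⊆ A') {a b : X}
    (hab : Relation.ReflTransGen (fun u v => κ u v ∧ u ∈ A ∧ v ∈ A) a b) :
    Relation.ReflTransGen (fun u v => κ u v ∧ u ∈ A' ∧ v ∈ A') a b :=
  Relation.ReflTransGen.mono (fun _ _ ⟨huv, hu, hv⟩ => ⟨huv, hAA' hu, hAA' hv⟩) a b hab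

theorem dConn_singleton (y : Y) : DConn lam {y} := by
  rintro a rfl b rfl
  exact .refl

theorem dConn_pair {y₀ y₁ : Y} (h₀₁ : lam y₀ y₁) (h₁₀ : lam y₁ y₀) : DConn lam {y₀, y₁} := by
  rintro a (rfl | rfl) b (rfl | rfl)
  · exact .refl
  · exact .single ⟨h₀₁, .inl rfl, .inr rfl⟩
  · exact .single ⟨h₁₀, .inr rfl, .inl rfl⟩
  · exact .refl

theorem reflTransGen_preimage {f : X → Y} (hsurj : Function.Surjective f)
    (hfib : ∀ y, DConn κ (f ⁻¹' {y}))
    (hpair : ∀ y₀ y₁, lam y₀ y₁ → DConn κ (f ⁻¹' {y₀, y₁}))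
    {B : Set Y} {y y' : Y} (hy : y ∈ B)
    (hyy' : Relation.ReflTransGen (fun u v => lam u v ∧ u ∈ B ∧ v ∈ B) y y')
    {a x : X} (ha : f a = y) (hx : f x = y') :
    Relation.ReflTransGen (fun u v => κ u v ∧ u ∈ f ⁻¹' B ∧ v ∈ f ⁻¹' B) a x := by
  induction hyy' generalizing x with
  | refl =>
    have hfib_sub : f ⁻¹' {y} ⊆ f ⁻¹' B := Set.preimage_mono (Set.singleton_subset_iff.2 hy)
    exact reflTransGen_restrict_mono hfib_sub (hfib y a ha x hx)
  | @tail y₀ y₁ _ hstep ih =>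
    obtain ⟨adj, hy₀, hy₁⟩ := hstep
    obtain ⟨w, hw⟩ := hsurj y₀
    have hpair_sub : f ⁻¹' {y₀, y₁} ⊆ f ⁻¹' B :=
      Set.preimage_mono (Set.insert_subset hy₀ (Set.singleton_subset_iff.2 hy₁))
    exact (ih hw).trans
      (reflTransGen_restrict_mono hpair_sub (hpair y₀ y₁ adj w (.inl hw) x (.inr hx)))

theorem DConn.preimage {f : X → Y} (hsurj : Function.Surjective f)
    (hfib : ∀ y, DConn κ (f ⁻¹' {y}))
    (hpair : ∀ y₀ y₁, lam y₀ y₁ → DConn κ (f ⁻¹' {y₀, y₁}))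
    {B : Set Y} (hB : DConn lam B) : DConn κ (f ⁻¹' B) := fun a ha b hb =>
  reflTransGen_preimage hsurj hfib hpair ha (hB (f a) ha (f b) hb) rfl rfl

end Digital

theorem shy_iff_preimages_of_connected_connected_general {X Y : Type*}
    (κ : X → X → Prop) (lam : Y → Y → Prop)
    (hls : Symmetric lam)
    (f : X → Y) (hcont : DCont κ lam f) (hsurj : Function.Surjective f) :
    DShy κ lam f ↔ ∀ B : Set Y, DConn lam B → DConn κ (f ⁻¹' B) := by
  constructor
  · rintro ⟨-, -, hfib, hpair⟩ B hB
    exact hB.preimage hsurj hfib hpair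
  · intro H
    exact ⟨hcont, hsurj, fun y => H _ (dConn_singleton y),
      fun _ _ h => H _ (dConn_pair h (hls h))⟩

theorem shy_iff_preimages_of_connected_connected {X Y : Type*}
    (κ : X → X → Prop) (lam : Y → Y → Prop)
    (hκs : Symmetric κ) (hκi : Irreflexive κ)
    (hls : Symmetric lam) (hli : Irreflexive lam)
    (f : X → Y) (hcont : DCont κ lam f) (hsurj : Function.Surjective f) :
    DShy κ lam f ↔ ∀ B : Set Y, DConn lam B → DConn κ (f ⁻¹' B) :=
  shy_iff_preimages_of_connected_connected_general κ lam hls f hcont hsurj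
end

section
/- A continuous surjection f: X → Y of digital images is shy if and only if the multivalued function f⁻¹ has weak continuity (for adjacent y,y' in Y, the sets f⁻¹(y) and f⁻¹(y') are adjacent, i.e., contain equal or adjacent points) and f⁻¹(y) is connected for every y ∈ Y. -/
/-! The preimage of an adjacent pair `{y₀, y₁}` is the union of the fibres over `y₀` and `y₁`.
Given connected fibres, such a union is connected exactly when the two fibres are adjacent:
one way, join both ends of a path to the adjacent pair; the other way, a path from one fibre
to the other must step from the first into the second at some point. -/

def SetAdj {X : Type*} (κ : X → X → Prop) (A B : Set X) : Prop :=
  ∃ a ∈ A, ∃ b ∈ B, a = b ∨ κ a b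

namespace DConn

open Relation

variable {X : Type*} {κ : X → X → Prop} {A B : Set X}

lemma reflTransGen_mono (hAB : A ⊆ B) {a b : X}
    (h : ReflTransGen (fun u v => κ u v ∧ u ∈ A ∧ v ∈ A) a b) :
    ReflTransGen (fun u v => κ u v ∧ u ∈ B ∧ v ∈ B) a b :=
  ReflTransGen.mono (fun _ _ huv => ⟨huv.1, hAB huv.2.1, hAB huv.2.2⟩) _ _ h

lemma reflTransGen_symm [Std.Symm κ] {a b : X}
    (h : ReflTransGen (fun u v => κ u v ∧ u ∈ A ∧ v ∈ A) a b) :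
    ReflTransGen (fun u v => κ u v ∧ u ∈ A ∧ v ∈ A) b a :=
  haveI : Std.Symm (fun u v => κ u v ∧ u ∈ A ∧ v ∈ A) :=
    ⟨fun _ _ huv => ⟨Std.Symm.symm _ _ huv.1, huv.2.2, huv.2.1⟩⟩
  Std.Symm.symm _ _ h

lemma setAdj_of_reflTransGen {a b : X} (ha : a ∈ A) (hb : b ∈ B)
    (h : ReflTransGen (fun u v => κ u v ∧ u ∈ A ∪ B ∧ v ∈ A ∪ B) a b) : SetAdj κ A B := by
  induction h using ReflTransGen.head_induction_on with
  | refl => exact ⟨b, ha, b, hb, Or.inl rfl⟩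
  | @head p q step _ ih =>
    rcases step.2.2 with hq | hq
    · exact ih hq
    · exact ⟨p, ha, q, hq, Or.inr step.1⟩

lemma setAdj_of_union (h : DConn κ (A ∪ B)) (hA : A.Nonempty) (hB : B.Nonempty) :
    SetAdj κ A B :=
  let ⟨a, ha⟩ := hA
  let ⟨b, hb⟩ := hB
  setAdj_of_reflTransGen ha hb (h a (Or.inl ha) b (Or.inr hb))

lemma union [Std.Symm κ] (hA : DConn κ A) (hB : DConn κ B) (hAB : SetAdj κ A B) :
    DConn κ (A ∪ B) := by
  obtain ⟨p, hp, q, hq, hpq⟩ := hAB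
  have hqp : ReflTransGen (fun u v => κ u v ∧ u ∈ A ∪ B ∧ v ∈ A ∪ B) q p := by
    rcases hpq with rfl | hpq
    · exact ReflTransGen.refl
    · exact ReflTransGen.single ⟨Std.Symm.symm _ _ hpq, Or.inr hq, Or.inl hp⟩
  have to_p : ∀ x ∈ A ∪ B, ReflTransGen (fun u v => κ u v ∧ u ∈ A ∪ B ∧ v ∈ A ∪ B) x p := by
    rintro x (hx | hx)
    · exact reflTransGen_mono Set.subset_union_left (hA x hx p hp)
    · exact (reflTransGen_mono Set.subset_union_right (hB x hx q hq)).trans hqp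
  intro a ha b hb
  exact (to_p a ha).trans (reflTransGen_symm (to_p b hb))

end DConn

theorem shy_iff_weak_continuity_and_connected_fibers_general {X Y : Type*}
    (κ : X → X → Prop) (lam : Y → Y → Prop)
    (hκs : Symmetric κ)
    (f : X → Y) (hcont : DCont κ lam f) (hsurj : Function.Surjective f) :
    DShy κ lam f ↔
      ((∀ y y' : Y, lam y y' →
          ∃ a ∈ f ⁻¹' {y}, ∃ b ∈ f ⁻¹' {y'}, a = b ∨ κ a b) ∧
        ∀ y : Y, DConn κ (f ⁻¹' {y})) := by
  have : Std.Symm κ := ⟨fun _ _ h => hκs h⟩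
  have hpair : ∀ y₀ y₁ : Y, f ⁻¹' {y₀, y₁} = f ⁻¹' {y₀} ∪ f ⁻¹' {y₁} := fun _ _ => rfl
  have hfib_nonempty : ∀ y : Y, (f ⁻¹' {y}).Nonempty := fun y => hsurj y
  constructor
  · rintro ⟨-, -, hfib, hconn⟩
    refine ⟨fun y y' hl => ?_, hfib⟩
    have hconn_pair := hconn y y' hl
    rw [hpair] at hconn_pair
    exact hconn_pair.setAdj_of_union (hfib_nonempty y) (hfib_nonempty y')
  · rintro ⟨hadj, hfib⟩
    refine ⟨hcont, hsurj, hfib, fun y₀ y₁ hl => ?_⟩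
    rw [hpair]
    exact (hfib y₀).union (hfib y₁) (hadj y₀ y₁ hl)

theorem shy_iff_weak_continuity_and_connected_fibers {X Y : Type*}
    (κ : X → X → Prop) (lam : Y → Y → Prop)
    (hκs : Symmetric κ) (hκi : Irreflexive κ)
    (hls : Symmetric lam) (hli : Irreflexive lam)
    (f : X → Y) (hcont : DCont κ lam f) (hsurj : Function.Surjective f) :
    DShy κ lam f ↔
      ((∀ y y' : Y, lam y y' →
          ∃ a ∈ f ⁻¹' {y}, ∃ b ∈ f ⁻¹' {y'}, a = b ∨ κ a b) ∧
        ∀ y : Y, DConn κ (f ⁻¹' {y})) :=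
  shy_iff_weak_continuity_and_connected_fibers_general κ lam hκs f hcont hsurj
end

section
/- If f: X → Y is a shy map between digital images that is also injective, then f is an isomorphism. -/
/-! An injective surjection is an equivalence `e`, and `e.symm` maps each adjacent pair `{y₀, y₁}`
onto `e ⁻¹' {y₀, y₁}`, which shyness makes connected. A map sending adjacent pairs to connected
sets is continuous: a path in a connected set is carried, edge by edge, into a chain of
connected pieces of the image. -/

theorem DConn.reflTransGen_of_subset {X : Type*} {κ : X → X → Prop} {A B : Set X}
    (hA : DConn κ A) (hAB : A ⊆ B) {a b : X} (ha : a ∈ A) (hb : b ∈ A) :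
    Relation.ReflTransGen (fun u v => κ u v ∧ u ∈ B ∧ v ∈ B) a b :=
  Relation.ReflTransGen.mono (fun _ _ ⟨huv, hu, hv⟩ => ⟨huv, hAB hu, hAB hv⟩) _ _ (hA a ha b hb)

theorem DCont.of_image_pair {X Y : Type*} {κ : X → X → Prop} {lam : Y → Y → Prop} {g : Y → X}
    (hpair : ∀ y₀ y₁, lam y₀ y₁ → DConn κ (g '' {y₀, y₁})) : DCont lam κ g := by
  rintro B hB _ ⟨a, ha, rfl⟩ _ ⟨b, hb, rfl⟩
  refine (hB a ha b hb).lift' g fun c d ⟨hcd, hc, hd⟩ => ?_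
  have hsub : g '' {c, d} ⊆ g '' B := Set.image_mono (Set.pair_subset hc hd)
  exact (hpair c d hcd).reflTransGen_of_subset hsub ⟨c, .inl rfl, rfl⟩ ⟨d, .inr rfl, rfl⟩

theorem DCont.equiv_symm {X Y : Type*} {κ : X → X → Prop} {lam : Y → Y → Prop} (e : X ≃ Y)
    (hpair : ∀ y₀ y₁, lam y₀ y₁ → DConn κ (e ⁻¹' {y₀, y₁})) : DCont lam κ e.symm :=
  DCont.of_image_pair fun y₀ y₁ h => by
    rw [e.symm.image_eq_preimage_symm, e.symm_symm]
    exact hpair y₀ y₁ h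

theorem injective_shy_is_isomorphism_general {X Y : Type*}
    (κ : X → X → Prop) (lam : Y → Y → Prop)
    (f : X → Y) (hshy : DShy κ lam f) (hinj : Function.Injective f) :
    Function.Bijective f ∧
      ∃ g : Y → X, DCont lam κ g ∧
        Function.LeftInverse g f ∧ Function.RightInverse g f := by
  obtain ⟨-, hsurj, -, hpair⟩ := hshy
  let e := Equiv.ofBijective f ⟨hinj, hsurj⟩
  exact ⟨e.bijective, e.symm, DCont.equiv_symm e hpair, e.symm_apply_apply, e.apply_symm_apply⟩

theorem injective_shy_is_isomorphism {X Y : Type*}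
    (κ : X → X → Prop) (lam : Y → Y → Prop)
    (hκs : Symmetric κ) (hκi : Irreflexive κ)
    (hls : Symmetric lam) (hli : Irreflexive lam)
    (f : X → Y) (hshy : DShy κ lam f) (hinj : Function.Injective f) :
    Function.Bijective f ∧
      ∃ g : Y → X, DCont lam κ g ∧
        Function.LeftInverse g f ∧ Function.RightInverse g f :=
  injective_shy_is_isomorphism_general κ lam f hshy hinj
end

section
/- The composition of two shy maps f: A → B and g: B → C between digital images is a shy map. -/
open Relation

section

variable {X Y Z : Type*} {κ : X → X → Prop} {lam : Y → Y → Prop} {μ : Z → Z → Prop}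

lemma reflTransGen_adj_mono {S T : Set X} (hST : S ⊆ T) {a b : X}
    (h : ReflTransGen (fun u v => κ u v ∧ u ∈ S ∧ v ∈ S) a b) :
    ReflTransGen (fun u v => κ u v ∧ u ∈ T ∧ v ∈ T) a b :=
  ReflTransGen.mono (fun _ _ ⟨huv, hu, hv⟩ => ⟨huv, hST hu, hST hv⟩) _ _ h

theorem DCont.comp {f : X → Y} {g : Y → Z} (hg : DCont lam μ g) (hf : DCont κ lam f) :
    DCont κ μ (g ∘ f) := fun A hA => by
  rw [Set.image_comp]
  exact hg _ (hf A hA)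

theorem DShy.dConn_preimage {f : X → Y} (hf : DShy κ lam f) {S : Set Y} (hS : DConn lam S) :
    DConn κ (f ⁻¹' S) := by
  obtain ⟨-, hsurj, hfiber, hpair⟩ := hf
  intro a ha b hb
  suffices lift : ∀ y, ReflTransGen (fun u v => lam u v ∧ u ∈ S ∧ v ∈ S) (f a) y →
      ∀ x, f x = y → ReflTransGen (fun u v => κ u v ∧ u ∈ f ⁻¹' S ∧ v ∈ f ⁻¹' S) a x from
    lift _ (hS _ ha _ hb) b rfl
  intro y hy
  induction hy with
  | refl =>
    intro x hx
    refine reflTransGen_adj_mono (fun z hz => ?_) (hfiber (f a) a rfl x hx)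
    rwa [Set.mem_preimage, Set.mem_singleton_iff.1 hz]
  | tail _ hstep ih =>
    obtain ⟨huv, hu, hv⟩ := hstep
    intro x hx
    obtain ⟨x', hx'⟩ := hsurj _
    have hpair_sub : f ⁻¹' {_, _} ⊆ f ⁻¹' S := Set.preimage_mono (Set.pair_subset hu hv)
    exact (ih x' hx').trans <| reflTransGen_adj_mono hpair_sub <|
      hpair _ _ huv x' (by simp [hx']) x (by simp [hx])

end

theorem composition_of_shy_is_shy_general {A B C : Type*}
    (κ : A → A → Prop) (lam : B → B → Prop) (μ : C → C → Prop)
    (f : A → B) (g : B → C)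
    (hf : DShy κ lam f) (hg : DShy lam μ g) :
    DShy κ μ (g ∘ f) := by
  obtain ⟨hg_cont, hg_surj, hg_fiber, hg_pair⟩ := hg
  exact ⟨hg_cont.comp hf.1, hg_surj.comp hf.2.1, fun z => hf.dConn_preimage (hg_fiber z),
    fun z₀ z₁ h => hf.dConn_preimage (hg_pair z₀ z₁ h)⟩

theorem composition_of_shy_is_shy {A B C : Type*}
    (κ : A → A → Prop) (lam : B → B → Prop) (μ : C → C → Prop)
    (hκs : Symmetric κ) (hκi : Irreflexive κ)
    (hls : Symmetric lam) (hli : Irreflexive lam)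
    (hμs : Symmetric μ) (hμi : Irreflexive μ)
    (f : A → B) (g : B → C)
    (hf : DShy κ lam f) (hg : DShy lam μ g) :
    DShy κ μ (g ∘ f) :=
  composition_of_shy_is_shy_general κ lam μ f g hf hg
end

section
/- Given functions f:(A,α)→(C,γ) and g:(B,β)→(D,δ) between digital images, f and g are both continuous if and only if the product map f × g : (A×B, k*(α,β)) → (C×D, k*(γ,δ)), (f×g)(a,b) = (f(a),g(b)), is continuous, where k* denotes the normal product adjacency. -/
/-- Normal product adjacency. -/
def NP {X Y : Type*} (κ : X → X → Prop) (lam : Y → Y → Prop) :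
    X × Y → X × Y → Prop :=
  fun p q => p ≠ q ∧ (p.1 = q.1 ∨ κ p.1 q.1) ∧ (p.2 = q.2 ∨ lam p.2 q.2)

lemma dcont_iff_ptwise {X Y : Type*} {κ : X → X → Prop} {lam : Y → Y → Prop}
    (hκs : Symmetric κ) (hlami : Irreflexive lam) (f : X → Y) :
    DCont κ lam f ↔ ∀ x y, κ x y → f x = f y ∨ lam (f x) (f y) := by
  constructor
  · intro h x y hxy
    have hconn : DConn κ ({x, y} : Set X) := by
      intro a ha b hb
      simp only [Set.mem_insert_iff, Set.mem_singleton_iff] at ha hb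
      rcases ha with rfl | rfl <;> rcases hb with rfl | rfl
      · exact .refl
      · exact .single ⟨hxy, by simp, by simp⟩
      · exact .single ⟨hκs hxy, by simp, by simp⟩
      · exact .refl
    have hpath := h _ hconn (f x) ⟨x, by simp, rfl⟩ (f y) ⟨y, by simp, rfl⟩
    rcases hpath.cases_head with heq | ⟨c, ⟨hstep, _, hc⟩, _⟩
    · exact Or.inl heq
    · obtain ⟨z, hz, rfl⟩ := hc
      simp only [Set.mem_insert_iff, Set.mem_singleton_iff] at hz
      rcases hz with rfl | rfl
      · exact absurd hstep (hlami _)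
      · exact Or.inr hstep
  · intro h Aset hA c hc d hd
    obtain ⟨a, ha, rfl⟩ := hc
    obtain ⟨b, hb, rfl⟩ := hd
    have hp := hA a ha b hb
    clear hb
    induction hp with
    | refl => exact .refl
    | tail _ hstep ih =>
      obtain ⟨hmv, hm, hv⟩ := hstep
      rcases h _ _ hmv with heq | hl
      · exact heq ▸ ih
      · exact ih.tail ⟨hl, ⟨_, hm, rfl⟩, ⟨_, hv, rfl⟩⟩

theorem product_map_continuous_iff {A B C D : Type*} [Nonempty A] [Nonempty B]
    (α : A → A → Prop) (β : B → B → Prop) (γ : C → C → Prop) (δ : D → D → Prop)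
    (hαs : Symmetric α) (hαi : Irreflexive α)
    (hβs : Symmetric β) (hβi : Irreflexive β)
    (hγs : Symmetric γ) (hγi : Irreflexive γ)
    (hδs : Symmetric δ) (hδi : Irreflexive δ)
    (f : A → C) (g : B → D) :
    (DCont α γ f ∧ DCont β δ g) ↔
      DCont (NP α β) (NP γ δ) (Prod.map f g) := by

  have hNPs : Symmetric (NP α β) := fun p q ⟨hne, h1, h2⟩ =>
    ⟨hne.symm, h1.imp Eq.symm (fun h => hαs h), h2.imp Eq.symm (fun h => hβs h)⟩
  have hNPi : Irreflexive (NP γ δ) := fun p hp => hp.1 rfl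
  rw [dcont_iff_ptwise hαs hγi, dcont_iff_ptwise hβs hδi,
    dcont_iff_ptwise hNPs hNPi]
  constructor
  · rintro ⟨hf, hg⟩ ⟨a, b⟩ ⟨a', b'⟩ ⟨_, h1, h2⟩
    have hc : f a = f a' ∨ γ (f a) (f a') := by
      rcases h1 with rfl | h1
      · exact Or.inl rfl
      · exact hf _ _ h1
    have hd : g b = g b' ∨ δ (g b) (g b') := by
      rcases h2 with rfl | h2
      · exact Or.inl rfl
      · exact hg _ _ h2
    by_cases heq : Prod.map f g (a, b) = Prod.map f g (a', b')
    · exact Or.inl heq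
    · exact Or.inr ⟨heq, hc, hd⟩
  · intro h
    constructor
    · intro a a' haa
      obtain ⟨b⟩ := ‹Nonempty B›
      have hne : (a, b) ≠ (a', b) := fun he => hαi a (by cases he; exact haa)
      rcases h (a, b) (a', b) ⟨hne, Or.inr haa, Or.inl rfl⟩ with heq | ⟨_, h1, _⟩
      · exact Or.inl (congrArg Prod.fst heq)
      · exact h1
    · intro b b' hbb
      obtain ⟨a⟩ := ‹Nonempty A›
      have hne : (a, b) ≠ (a, b') := fun he => hβi b (by cases he; exact hbb)
      rcases h (a, b) (a, b') ⟨hne, Or.inl rfl, Or.inr hbb⟩ with heq | ⟨_, _, h2⟩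
      · exact Or.inl (congrArg Prod.snd heq)
      · exact h2
end

section
/- Let f:(A,α)→(C,γ) and g:(B,β)→(D,δ) be continuous surjections between digital images. Then f and g are both shy if and only if the product map f × g : (A×B, k*(α,β)) → (C×D, k*(γ,δ)) is shy. -/
/-!
Everything reduces to "equal or adjacent" (`ReflGen`) steps, for which the normal product is
exactly the product relation: `(p, q)` is equal-or-adjacent in `k*(κ, λ)` iff both coordinates
are. Hence fibres of `f × g` over points and over pairs differing in one coordinate are products
of connected fibres of `f` and `g`, and products of connected sets are connected. Over a pair
`(c₀, d₀), (c₁, d₁)` with both coordinates adjacent, the preimage is the union of two connected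
boxes; a path in `f⁻¹{c₀, c₁}` crosses from `f⁻¹ c₀` to `f⁻¹ c₁` along an edge `u ~ v`, likewise
`u' ~ v'` in `B`, and `(u, u') ~ (v, v')` joins the boxes. Conversely, `f` is recovered from
`f × g` by composing with a slice `a ↦ (a, b)` and the projection, both continuous, and the
fibres of `f` are the projections of fibres of `f × g`.
-/

open Relation Set

section Connectedness

variable {X Y Z : Type*} {κ : X → X → Prop} {lam : Y → Y → Prop}

abbrev AdjWithin (κ : X → X → Prop) (S : Set X) (u v : X) : Prop :=
  κ u v ∧ u ∈ S ∧ v ∈ S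

lemma reflTransGen_adjWithin_map {F : X → Y} {S : Set X} {T : Set Y} (hST : MapsTo F S T)
    (hF : ∀ u ∈ S, ∀ v ∈ S, κ u v → ReflGen lam (F u) (F v)) {a b : X}
    (h : ReflTransGen (AdjWithin κ S) a b) :
    ReflTransGen (AdjWithin lam T) (F a) (F b) := by
  refine ReflTransGen.lift' F (fun u v ⟨huv, hu, hv⟩ => ?_) _ _ h
  rcases (reflGen_iff _ _ _).1 (hF u hu v hv huv) with h | hl
  · rw [Function.onFun, h]
  · exact .single ⟨hl, hST hu, hST hv⟩

lemma DConn.image {F : X → Y} {S : Set X}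
    (hF : ∀ u ∈ S, ∀ v ∈ S, κ u v → ReflGen lam (F u) (F v)) (hS : DConn κ S) :
    DConn lam (F '' S) := by
  rintro _ ⟨a, ha, rfl⟩ _ ⟨b, hb, rfl⟩
  exact reflTransGen_adjWithin_map (mapsTo_image F S) hF (hS a ha b hb)

lemma dCont_of_reflGen {F : X → Y} (hF : ∀ u v, κ u v → ReflGen lam (F u) (F v)) :
    DCont κ lam F :=
  fun _ hS => hS.image fun u _ v _ => hF u v

lemma DCont.comp_s11 {μ : Z → Z → Prop} {G : Y → Z} {F : X → Y} (hG : DCont lam μ G)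
    (hF : DCont κ lam F) : DCont κ μ (G ∘ F) := by
  intro S hS
  rw [image_comp]
  exact hG _ (hF S hS)

lemma DConn.exists_adj_boundary {S P : Set X} (hS : DConn κ S) {a b : X} (ha : a ∈ S)
    (haP : a ∈ P) (hb : b ∈ S) (hbP : b ∉ P) :
    ∃ u v, κ u v ∧ u ∈ S ∧ v ∈ S ∧ u ∈ P ∧ v ∉ P := by
  induction hS a ha b hb with
  | refl => exact absurd haP hbP
  | @tail c d _ hcd ih =>
    by_cases hc : c ∈ P
    · exact ⟨c, d, hcd.1, hcd.2.1, hcd.2.2, hc, hbP⟩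
    · exact ih hcd.2.1 hc

lemma DConn.pair (hκ : Symmetric κ) {x y : X} (h : κ x y) : DConn κ {x, y} := by
  have hx : x ∈ ({x, y} : Set X) := mem_insert x _
  have hy : y ∈ ({x, y} : Set X) := mem_insert_of_mem x rfl
  rintro a (rfl | rfl) b (rfl | rfl)
  · rfl
  · exact .single ⟨h, hx, hy⟩
  · exact .single ⟨hκ h, hy, hx⟩
  · rfl

lemma reflGen_of_dConn_pair {a b : Y} (h : DConn lam {a, b}) : ReflGen lam a b := by
  by_cases hab : a = b
  · exact hab ▸ .refl
  obtain ⟨u, v, huv, -, hv, rfl, hvu⟩ :=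
    h.exists_adj_boundary (P := {a}) (mem_insert a _) rfl (mem_insert_of_mem a rfl) (Ne.symm hab)
  obtain rfl : v = b := hv.resolve_left hvu
  exact .single huv

lemma DCont.reflGen_map (hκ : Symmetric κ) {F : X → Y} (hF : DCont κ lam F) {x y : X}
    (h : ReflGen κ x y) : ReflGen lam (F x) (F y) := by
  rcases h with _ | hxy
  · rfl
  · exact reflGen_of_dConn_pair (image_pair F x y ▸ hF _ (DConn.pair hκ hxy))

lemma DConn.union_of_adj (hκ : Symmetric κ) {P Q : Set X} (hP : DConn κ P) (hQ : DConn κ Q)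
    {u v : X} (hu : u ∈ P) (hv : v ∈ Q) (huv : κ u v) : DConn κ (P ∪ Q) := by
  have reach : ∀ x ∈ P ∪ Q, ReflTransGen (AdjWithin κ (P ∪ Q)) u x := by
    rintro x (hx | hx)
    · exact ReflTransGen.mono (fun _ _ h => ⟨h.1, .inl h.2.1, .inl h.2.2⟩) _ _ (hP u hu x hx)
    · exact .head ⟨huv, .inl hu, .inr hv⟩
        (ReflTransGen.mono (fun _ _ h => ⟨h.1, .inr h.2.1, .inr h.2.2⟩) _ _ (hQ v hv x hx))
  intro a ha b hb
  exact (ReflTransGen.mono (fun _ _ h => ⟨hκ h.1, h.2.2, h.2.1⟩) _ _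
    (ReflTransGen.swap _ _ (reach a ha))).trans (reach b hb)

end Connectedness

section NormalProduct

variable {X Y : Type*} {κ : X → X → Prop} {lam : Y → Y → Prop}

lemma reflGen_np_iff {p q : X × Y} :
    ReflGen (NP κ lam) p q ↔ ReflGen κ p.1 q.1 ∧ ReflGen lam p.2 q.2 := by
  simp only [reflGen_iff, NP, ne_eq, Prod.ext_iff]
  grind

lemma symmetric_np (hκ : Symmetric κ) (hlam : Symmetric lam) : Symmetric (NP κ lam) := by
  intro _ _ h
  exact ⟨h.1.symm, h.2.1.imp Eq.symm (@hκ _ _), h.2.2.imp Eq.symm (@hlam _ _)⟩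

lemma dCont_fst : DCont (NP κ lam) κ Prod.fst :=
  dCont_of_reflGen fun _ _ h => (reflGen_np_iff.1 (.single h)).1

lemma dCont_snd : DCont (NP κ lam) lam Prod.snd :=
  dCont_of_reflGen fun _ _ h => (reflGen_np_iff.1 (.single h)).2

lemma dCont_prodMk_left (b : Y) : DCont κ (NP κ lam) fun a => (a, b) :=
  dCont_of_reflGen fun _ _ h => reflGen_np_iff.2 ⟨.single h, .refl⟩

lemma dCont_prodMk_right (a : X) : DCont lam (NP κ lam) (Prod.mk a) :=
  dCont_of_reflGen fun _ _ h => reflGen_np_iff.2 ⟨.refl, .single h⟩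

lemma DConn.prod {S : Set X} {T : Set Y} (hS : DConn κ S) (hT : DConn lam T) :
    DConn (NP κ lam) (S ×ˢ T) := by
  rintro ⟨a, b⟩ ⟨ha, hb⟩ ⟨a', b'⟩ ⟨ha', hb'⟩
  have horizontal : ReflTransGen (AdjWithin (NP κ lam) (S ×ˢ T)) (a, b) (a', b) :=
    reflTransGen_adjWithin_map (F := fun u => (u, b)) (fun _ hu => mk_mem_prod hu hb)
      (fun _ _ _ _ h => reflGen_np_iff.2 ⟨.single h, .refl⟩) (hS a ha a' ha')
  have vertical : ReflTransGen (AdjWithin (NP κ lam) (S ×ˢ T)) (a', b) (a', b') :=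
    reflTransGen_adjWithin_map (F := Prod.mk a') (fun _ hv => mk_mem_prod ha' hv)
      (fun _ _ _ _ h => reflGen_np_iff.2 ⟨.refl, .single h⟩) (hT b hb b' hb')
  exact horizontal.trans vertical

end NormalProduct

section Shy

variable {X Y : Type*} {κ : X → X → Prop} {lam : Y → Y → Prop} {F : X → Y}

lemma dShy_iff : DShy κ lam F ↔ DCont κ lam F ∧ Function.Surjective F ∧
    ∀ y₀ y₁, ReflGen lam y₀ y₁ → DConn κ (F ⁻¹' {y₀, y₁}) := by
  refine and_congr_right' (and_congr_right' ⟨fun ⟨hfib, hadj⟩ y₀ y₁ h => ?_,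
    fun h => ⟨fun y => ?_, fun y₀ y₁ hy => h y₀ y₁ (.single hy)⟩⟩)
  · rcases h with _ | hy
    · simpa only [pair_eq_singleton] using hfib y₀
    · exact hadj y₀ y₁ hy
  · simpa only [pair_eq_singleton] using h y y .refl

lemma DShy.exists_adj_of_adj (hF : DShy κ lam F) {y₀ y₁ : Y} (hne : y₀ ≠ y₁)
    (h : lam y₀ y₁) : ∃ u v, κ u v ∧ F u = y₀ ∧ F v = y₁ := by
  obtain ⟨a, rfl⟩ := hF.2.1 y₀
  obtain ⟨b, rfl⟩ := hF.2.1 y₁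
  obtain ⟨u, v, huv, -, hv, hu, hvu⟩ := (hF.2.2.2 _ _ h).exists_adj_boundary
    (P := F ⁻¹' {F a}) (.inl rfl) rfl (.inr rfl) hne.symm
  exact ⟨u, v, huv, hu, hv.resolve_left hvu⟩

end Shy

section ProductMap

variable {A B C D : Type*} {α : A → A → Prop} {β : B → B → Prop} {γ : C → C → Prop}
  {δ : D → D → Prop} {f : A → C} {g : B → D}

lemma DShy.dConn_preimage_prodMap_pair (hαs : Symmetric α) (hβs : Symmetric β)
    (hf : DShy α γ f) (hg : DShy β δ g) {p q : C × D} (hpq : NP γ δ p q) :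
    DConn (NP α β) (Prod.map f g ⁻¹' {p, q}) := by
  obtain ⟨c₀, d₀⟩ := p
  obtain ⟨c₁, d₁⟩ := q
  obtain ⟨hc, hd⟩ := reflGen_np_iff.1 (.single hpq)
  by_cases hdeg : c₀ = c₁ ∨ d₀ = d₁
  · have hbox : ({(c₀, d₀), (c₁, d₁)} : Set (C × D)) = {c₀, c₁} ×ˢ {d₀, d₁} := by
      rcases hdeg with rfl | rfl <;> simp [singleton_prod, prod_singleton, image_pair]
    rw [hbox, preimage_prod_map_prod]
    exact ((dShy_iff.1 hf).2.2 _ _ hc).prod ((dShy_iff.1 hg).2.2 _ _ hd)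
  obtain ⟨hc₀₁, hd₀₁⟩ := not_or.1 hdeg
  obtain ⟨u, v, huv, rfl, rfl⟩ :=
    hf.exists_adj_of_adj hc₀₁ ((reflGen_iff _ _ _).1 hc |>.resolve_left (Ne.symm hc₀₁))
  obtain ⟨u', v', huv', rfl, rfl⟩ :=
    hg.exists_adj_of_adj hd₀₁ ((reflGen_iff _ _ _).1 hd |>.resolve_left (Ne.symm hd₀₁))
  rw [insert_eq, preimage_union, ← singleton_prod_singleton, ← singleton_prod_singleton,
    preimage_prod_map_prod, preimage_prod_map_prod]
  exact DConn.union_of_adj (symmetric_np hαs hβs) ((hf.2.2.1 _).prod (hg.2.2.1 _))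
    ((hf.2.2.1 _).prod (hg.2.2.1 _)) (u := (u, u')) (v := (v, v')) ⟨rfl, rfl⟩ ⟨rfl, rfl⟩
    ⟨fun h => hc₀₁ (congrArg (f ∘ Prod.fst) h), .inr huv, .inr huv'⟩

theorem DShy.prodMap (hαs : Symmetric α) (hβs : Symmetric β) (hf : DShy α γ f)
    (hg : DShy β δ g) : DShy (NP α β) (NP γ δ) (Prod.map f g) := by
  refine ⟨dCont_of_reflGen fun p q hpq => ?_, hf.2.1.prodMap hg.2.1, fun ⟨c, d⟩ => ?_,
    fun p q hpq => hf.dConn_preimage_prodMap_pair hαs hβs hg hpq⟩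
  · obtain ⟨h₁, h₂⟩ := reflGen_np_iff.1 (.single hpq)
    exact reflGen_np_iff.2 ⟨hf.1.reflGen_map hαs h₁, hg.1.reflGen_map hβs h₂⟩
  · rw [← singleton_prod_singleton, preimage_prod_map_prod]
    exact (hf.2.2.1 c).prod (hg.2.2.1 d)

theorem DShy.of_prodMap_left [Nonempty B] (h : DShy (NP α β) (NP γ δ) (Prod.map f g)) :
    DShy α γ f := by
  obtain ⟨b⟩ := ‹Nonempty B›
  obtain ⟨hcont, hsurj, hpre⟩ := dShy_iff.1 h
  refine dShy_iff.2 ⟨dCont_fst.comp_s11 (hcont.comp_s11 (dCont_prodMk_left b)), fun c => ?_,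
    fun c₀ c₁ hc => ?_⟩
  · obtain ⟨p, hp⟩ := hsurj (c, g b)
    exact ⟨p.1, congrArg Prod.fst hp⟩
  · have hslice : ({(c₀, g b), (c₁, g b)} : Set (C × D)) = {c₀, c₁} ×ˢ {g b} := by
      rw [prod_singleton, image_pair]
    have := dCont_fst _ (hpre (c₀, g b) (c₁, g b) (reflGen_np_iff.2 ⟨hc, .refl⟩))
    rwa [hslice, preimage_prod_map_prod, fst_image_prod _ (t := g ⁻¹' {g b}) ⟨b, rfl⟩] at this

theorem DShy.of_prodMap_right [Nonempty A] (h : DShy (NP α β) (NP γ δ) (Prod.map f g)) :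
    DShy β δ g := by
  obtain ⟨a⟩ := ‹Nonempty A›
  obtain ⟨hcont, hsurj, hpre⟩ := dShy_iff.1 h
  refine dShy_iff.2 ⟨dCont_snd.comp_s11 (hcont.comp_s11 (dCont_prodMk_right a)), fun d => ?_,
    fun d₀ d₁ hd => ?_⟩
  · obtain ⟨p, hp⟩ := hsurj (f a, d)
    exact ⟨p.2, congrArg Prod.snd hp⟩
  · have hslice : ({(f a, d₀), (f a, d₁)} : Set (C × D)) = {f a} ×ˢ {d₀, d₁} := by
      rw [singleton_prod, image_pair]
    have := dCont_snd _ (hpre (f a, d₀) (f a, d₁) (reflGen_np_iff.2 ⟨.refl, hd⟩))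
    rwa [hslice, preimage_prod_map_prod, snd_image_prod (s := f ⁻¹' {f a}) ⟨a, rfl⟩] at this

end ProductMap

theorem product_map_shy_iff_general {A B C D : Type*}
    [Nonempty A] [Nonempty B]
    (α : A → A → Prop) (β : B → B → Prop) (γ : C → C → Prop) (δ : D → D → Prop)
    (hαs : Symmetric α)
    (hβs : Symmetric β)
    (f : A → C) (g : B → D) :
    (DShy α γ f ∧ DShy β δ g) ↔
      DShy (NP α β) (NP γ δ) (Prod.map f g) :=
  ⟨fun ⟨hf, hg⟩ => hf.prodMap hαs hβs hg, fun h => ⟨h.of_prodMap_left, h.of_prodMap_right⟩⟩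

theorem product_map_shy_iff {A B C D : Type*}
    [Nonempty A] [Nonempty B] [Nonempty C] [Nonempty D]
    (α : A → A → Prop) (β : B → B → Prop) (γ : C → C → Prop) (δ : D → D → Prop)
    (hαs : Symmetric α) (hαi : Irreflexive α)
    (hβs : Symmetric β) (hβi : Irreflexive β)
    (hγs : Symmetric γ) (hγi : Irreflexive γ)
    (hδs : Symmetric δ) (hδi : Irreflexive δ)
    (f : A → C) (g : B → D)
    (hf : DCont α γ f) (hfs : Function.Surjective f)
    (hg : DCont β δ g) (hgs : Function.Surjective g) :
    (DShy α γ f ∧ DShy β δ g) ↔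
      DShy (NP α β) (NP γ δ) (Prod.map f g) :=
  product_map_shy_iff_general α β γ δ hαs hβs f g
end

section
/- In ℤ^{m+n}, the normal product adjacency of c_m-adjacency on ℤ^m and c_n-adjacency on ℤ^n equals c_{m+n}-adjacency: for x,x' ∈ ℤ^m and y,y' ∈ ℤ^n, (x,y) and (x',y') are k*(c_m,c_n)-adjacent iff they are c_{m+n}-adjacent. -/
/-- The `c_u`-adjacency on ℤ^k. -/
def cAdj {k : ℕ} (u : ℕ) (p q : Fin k → ℤ) : Prop :=
  p ≠ q ∧ (∀ i, |p i - q i| ≤ 1) ∧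
    (Finset.univ.filter (fun i => p i ≠ q i)).card ≤ u

theorem normal_product_of_cAdj {m n : ℕ} (hm : 1 ≤ m) (hn : 1 ≤ n)
    (x x' : Fin m → ℤ) (y y' : Fin n → ℤ) :
    NP (cAdj m) (cAdj n) (x, y) (x', y') ↔
      cAdj (m + n) (Fin.append x y) (Fin.append x' y') := by
  have hcard : ∀ {k : ℕ} (p q : Fin k → ℤ),
      (Finset.univ.filter (fun i => p i ≠ q i)).card ≤ k := by
    intro k p q
    calc (Finset.univ.filter (fun i => p i ≠ q i)).card
        ≤ (Finset.univ : Finset (Fin k)).card := Finset.card_filter_le _ _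
      _ = k := by simp
  have happ : Fin.append x y = Fin.append x' y' ↔ x = x' ∧ y = y' := by
    constructor
    · intro h
      constructor
      · funext i; have := congrFun h (Fin.castAdd n i); simpa using this
      · funext j; have := congrFun h (Fin.natAdd m j); simpa using this
    · rintro ⟨rfl, rfl⟩; rfl
  constructor
  · rintro ⟨hne, hx, hy⟩
    refine ⟨?_, ?_, hcard _ _⟩
    · intro h
      rw [happ] at h
      exact hne (by simp [Prod.ext_iff, h.1, h.2])
    · intro i
      refine Fin.addCases ?_ ?_ i
      · intro i
        simp only [Fin.append_left]
        rcases hx with h | h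
        · simp [show x = x' from h]
        · exact h.2.1 i
      · intro j
        simp only [Fin.append_right]
        rcases hy with h | h
        · simp [show y = y' from h]
        · exact h.2.1 j
  · rintro ⟨hne, hb, -⟩
    refine ⟨?_, ?_, ?_⟩
    · intro h
      simp only [Prod.mk.injEq] at h
      exact hne (happ.mpr ⟨h.1, h.2⟩)
    · by_cases hxx : x = x'
      · exact Or.inl hxx
      · refine Or.inr ⟨hxx, fun i => ?_, hcard _ _⟩
        have := hb (Fin.castAdd n i)
        simpa [Fin.append_left] using this
    · by_cases hyy : y = y'
      · exact Or.inl hyy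
      · refine Or.inr ⟨hyy, fun j => ?_, hcard _ _⟩
        have := hb (Fin.natAdd m j)
        simpa [Fin.append_right] using this
end

section
/- Let (C,κ) = X ∧ Y be a wedge of digital images with X ∩ Y = {x₀}, and let f: A → C', g: B → D' be functions with A ∩ B = {a₀}, C' ∩ D' = {y₀}, f(a₀) = y₀ = g(a₀), where A ∧ B and C' ∧ D' are wedges. Then f and g are both shy if and only if the map f ∧ g : A ∧ B → C' ∧ D' (equal to f on A and g on B) is shy. -/
/-- Shyness of `f` viewed as a map from the subset `S` onto the subset `T`. -/
def DShyOn {X Y : Type*} (κ : X → X → Prop) (lam : Y → Y → Prop)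
    (f : X → Y) (S : Set X) (T : Set Y) : Prop :=
  (∀ s ∈ S, f s ∈ T) ∧
  (∀ A : Set X, A ⊆ S → DConn κ A → DConn lam (f '' A)) ∧
  (∀ t ∈ T, ∃ s ∈ S, f s = t) ∧
  (∀ y : Y, DConn κ (S ∩ f ⁻¹' {y})) ∧
  ∀ y₀ y₁ : Y, y₀ ∈ T → y₁ ∈ T → lam y₀ y₁ → DConn κ (S ∩ f ⁻¹' {y₀, y₁})

/-!
In a wedge every adjacency lies within one of the two summands, and a connected set meets a
summand in a connected set, since a path can leave and re-enter a summand only through the wedge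
point. Hence continuity and the connectedness of preimages can be checked summand by summand: the
preimage of a point or of an adjacent pair `T` is the union of its parts in `A` and in `B`. These
parts meet at `a₀` when `y₀ ∈ T`; otherwise `T` lies in one summand of the target, and the part in
the other summand is empty.
-/

open Set Relation

section Connectedness

variable {W Z : Type*} {κ : W → W → Prop} {lam : Z → Z → Prop}

lemma reflTransGen_restrict_mono_s14 {P Q : Set W} (hPQ : P ⊆ Q) {a b : W}
    (h : ReflTransGen (fun u v => κ u v ∧ u ∈ P ∧ v ∈ P) a b) :
    ReflTransGen (fun u v => κ u v ∧ u ∈ Q ∧ v ∈ Q) a b :=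
  ReflTransGen.mono (fun _ _ ⟨huv, hu, hv⟩ => ⟨huv, hPQ hu, hPQ hv⟩) _ _ h

lemma DConn.pair_s14 (hκs : Symmetric κ) {u v : W} (huv : κ u v) : DConn κ {u, v} := by
  have hu : u ∈ ({u, v} : Set W) := mem_insert u {v}
  have hv : v ∈ ({u, v} : Set W) := mem_insert_of_mem u rfl
  rintro a (rfl | rfl) b (rfl | rfl)
  exacts [.refl, .single ⟨huv, hu, hv⟩, .single ⟨hκs huv, hv, hu⟩, .refl]

lemma DConn.union_s14 {P Q : Set W} {x : W} (hP : DConn κ P) (hxP : x ∈ P) (hxQ : x ∈ Q)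
    (hQ : DConn κ Q) : DConn κ (P ∪ Q) := by
  have hP' := fun a ha b hb =>
    reflTransGen_restrict_mono_s14 (subset_union_left (t := Q)) (hP a ha b hb)
  have hQ' := fun a ha b hb =>
    reflTransGen_restrict_mono_s14 (subset_union_right (s := P)) (hQ a ha b hb)
  rintro a (ha | ha) b (hb | hb)
  · exact hP' a ha b hb
  · exact (hP' a ha x hxP).trans (hQ' x hxQ b hb)
  · exact (hQ' a ha x hxQ).trans (hP' x hxP b hb)
  · exact hQ' a ha b hb

lemma DConn.image_of_adj {f : W → Z} {S : Set W} (hS : DConn κ S)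
    (hadj : ∀ u ∈ S, ∀ v ∈ S, κ u v →
      ReflTransGen (fun p q => lam p q ∧ p ∈ f '' S ∧ q ∈ f '' S) (f u) (f v)) :
    DConn lam (f '' S) := by
  rintro _ ⟨a, ha, rfl⟩ _ ⟨b, hb, rfl⟩
  have hab := hS a ha b hb
  clear hb
  induction hab with
  | refl => exact .refl
  | tail _ hcd ih => exact ih.trans (hadj _ hcd.2.1 _ hcd.2.2 hcd.1)

lemma reflTransGen_image_pair (hκs : Symmetric κ) {f : W → Z} {S : Set W}
    (hf : ∀ A ⊆ S, DConn κ A → DConn lam (f '' A)) {u v : W} (hu : u ∈ S) (hv : v ∈ S)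
    (huv : κ u v) :
    ReflTransGen (fun p q => lam p q ∧ p ∈ f '' {u, v} ∧ q ∈ f '' {u, v}) (f u) (f v) :=
  hf {u, v} (insert_subset hu (singleton_subset_iff.2 hv)) (DConn.pair_s14 hκs huv)
    _ (mem_image_of_mem f (mem_insert u _)) _ (mem_image_of_mem f (mem_insert_of_mem u rfl))

lemma dcont_of_forall_adj_mem (hκs : Symmetric κ) {f : W → Z} {A B : Set W}
    (hfA : ∀ S ⊆ A, DConn κ S → DConn lam (f '' S))
    (hfB : ∀ S ⊆ B, DConn κ S → DConn lam (f '' S))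
    (hadj : ∀ u v, κ u v → (u ∈ A ∧ v ∈ A) ∨ (u ∈ B ∧ v ∈ B)) : DCont κ lam f := by
  intro S hS
  refine hS.image_of_adj fun u hu v hv huv => ?_
  refine reflTransGen_restrict_mono_s14 (image_mono (insert_subset hu (singleton_subset_iff.2 hv))) ?_
  rcases hadj u v huv with ⟨huA, hvA⟩ | ⟨huB, hvB⟩
  exacts [reflTransGen_image_pair hκs hfA huA hvA huv, reflTransGen_image_pair hκs hfB huB hvB huv]

end Connectedness

structure IsWedge {W : Type*} (κ : W → W → Prop) (A B : Set W) (a₀ : W) : Prop where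
  union_eq : A ∪ B = univ
  inter_eq : A ∩ B = {a₀}
  eq_of_adj : ∀ x ∈ A, ∀ y ∈ B, κ x y → x = a₀ ∨ y = a₀

namespace IsWedge

variable {W : Type*} {κ : W → W → Prop} {A B : Set W} {a₀ : W}

lemma mem_or_mem (hW : IsWedge κ A B a₀) (x : W) : x ∈ A ∨ x ∈ B :=
  eq_univ_iff_forall.1 hW.union_eq x

lemma eq_of_mem_of_mem (hW : IsWedge κ A B a₀) {x : W} (hA : x ∈ A) (hB : x ∈ B) : x = a₀ :=
  mem_singleton_iff.1 (hW.inter_eq ▸ ⟨hA, hB⟩)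

lemma mem_left (hW : IsWedge κ A B a₀) : a₀ ∈ A :=
  (hW.inter_eq ▸ mem_singleton a₀ : a₀ ∈ A ∩ B).1

lemma mem_right (hW : IsWedge κ A B a₀) : a₀ ∈ B :=
  (hW.inter_eq ▸ mem_singleton a₀ : a₀ ∈ A ∩ B).2

lemma symm (hκs : Symmetric κ) (hW : IsWedge κ A B a₀) : IsWedge κ B A a₀ :=
  ⟨union_comm A B ▸ hW.union_eq, inter_comm A B ▸ hW.inter_eq,
    fun x hx y hy hxy => (hW.eq_of_adj y hy x hx (hκs hxy)).symm⟩

lemma adj_mem (hκs : Symmetric κ) (hW : IsWedge κ A B a₀) {u v : W} (huv : κ u v) :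
    (u ∈ A ∧ v ∈ A) ∨ (u ∈ B ∧ v ∈ B) := by
  rcases hW.mem_or_mem u with hu | hu <;> rcases hW.mem_or_mem v with hv | hv
  · exact .inl ⟨hu, hv⟩
  · rcases hW.eq_of_adj u hu v hv huv with rfl | rfl
    exacts [.inr ⟨hW.mem_right, hv⟩, .inl ⟨hu, hW.mem_left⟩]
  · rcases hW.eq_of_adj v hv u hu (hκs huv) with rfl | rfl
    exacts [.inr ⟨hu, hW.mem_right⟩, .inl ⟨hW.mem_left, hv⟩]
  · exact .inr ⟨hu, hv⟩

/-- A path in `S` ending in `A` that starts in `B` has to pass through `a₀`. -/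
lemma reflTransGen_inter (hκs : Symmetric κ) (hW : IsWedge κ A B a₀) {S : Set W} {a b : W}
    (hb : b ∈ A) (h : ReflTransGen (fun u v => κ u v ∧ u ∈ S ∧ v ∈ S) a b) :
    (a ∈ A → ReflTransGen (fun u v => κ u v ∧ u ∈ A ∩ S ∧ v ∈ A ∩ S) a b) ∧
    (a ∈ B → ReflTransGen (fun u v => κ u v ∧ u ∈ A ∩ S ∧ v ∈ A ∩ S) a₀ b) := by
  induction h using ReflTransGen.head_induction_on with
  | refl => exact ⟨fun _ => .refl, fun hbB => hW.eq_of_mem_of_mem hb hbB ▸ .refl⟩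
  | @head u c huc _ ih =>
    obtain ⟨huc, huS, hcS⟩ := huc
    have hstart : u ∈ A → ReflTransGen (fun u v => κ u v ∧ u ∈ A ∩ S ∧ v ∈ A ∩ S) u b := by
      intro huA
      rcases hW.adj_mem hκs huc with ⟨-, hcA⟩ | ⟨huB, hcB⟩
      · exact .head ⟨huc, ⟨huA, huS⟩, hcA, hcS⟩ (ih.1 hcA)
      · exact hW.eq_of_mem_of_mem huA huB ▸ ih.2 hcB
    refine ⟨hstart, fun huB => ?_⟩
    rcases hW.adj_mem hκs huc with ⟨huA, -⟩ | ⟨-, hcB⟩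
    · exact hW.eq_of_mem_of_mem huA huB ▸ hstart huA
    · exact ih.2 hcB

lemma dconn_inter (hκs : Symmetric κ) (hW : IsWedge κ A B a₀) {S : Set W} (hS : DConn κ S) :
    DConn κ (A ∩ S) :=
  fun a ha b hb => (hW.reflTransGen_inter hκs hb.1 (hS a ha.2 b hb.2)).1 ha.1

end IsWedge

section Preimages

variable {W Z : Type*} {A B : Set W} {C D T : Set Z} {f : W → Z} {y₀ : Z}

lemma preimage_subset_of_subset (hAB : A ∪ B = univ) (hCD : C ∩ D ⊆ {y₀}) (hB : MapsTo f B D)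
    (hTC : T ⊆ C) (hy₀ : y₀ ∉ T) : f ⁻¹' T ⊆ A := by
  intro x hx
  rcases eq_univ_iff_forall.1 hAB x with hxA | hxB
  · exact hxA
  · exact absurd (hCD ⟨hTC hx, hB hxB⟩ ▸ hx) hy₀

lemma dconn_preimage_of_inter {κ : W → W → Prop} {a₀ : W} (hAB : A ∪ B = univ)
    (ha₀A : a₀ ∈ A) (ha₀B : a₀ ∈ B) (hCD : C ∩ D ⊆ {y₀}) (hA : MapsTo f A C)
    (hB : MapsTo f B D) (h₀ : f a₀ = y₀) (hT : T ⊆ C ∨ T ⊆ D)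
    (hAT : DConn κ (A ∩ f ⁻¹' T)) (hBT : DConn κ (B ∩ f ⁻¹' T)) : DConn κ (f ⁻¹' T) := by
  by_cases hy₀ : y₀ ∈ T
  · have hsplit : f ⁻¹' T = (A ∩ f ⁻¹' T) ∪ (B ∩ f ⁻¹' T) := by
      rw [← union_inter_distrib_right, hAB, univ_inter]
    have ha₀T : f a₀ ∈ T := h₀ ▸ hy₀
    rw [hsplit]
    exact hAT.union_s14 ⟨ha₀A, ha₀T⟩ ⟨ha₀B, ha₀T⟩ hBT
  rcases hT with hTC | hTD
  · rwa [inter_eq_right.2 (preimage_subset_of_subset hAB hCD hB hTC hy₀)] at hAT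
  · rwa [inter_eq_right.2 (preimage_subset_of_subset (union_comm A B ▸ hAB)
      (inter_comm C D ▸ hCD) hA hTD hy₀)] at hBT

lemma surjOn_of_surjOn_univ {a₀ : W} (hAB : A ∪ B = univ) (ha₀ : a₀ ∈ A)
    (hCD : C ∩ D ⊆ {y₀}) (hB : MapsTo f B D) (h₀ : f a₀ = y₀) (hf : SurjOn f univ univ) :
    SurjOn f A C := by
  intro t ht
  obtain ⟨s, -, rfl⟩ := hf (mem_univ t)
  rcases eq_univ_iff_forall.1 hAB s with hs | hs
  · exact ⟨s, hs, rfl⟩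
  · exact ⟨a₀, ha₀, h₀.trans (hCD ⟨ht, hB hs⟩).symm⟩

end Preimages

section Shy

variable {W Z : Type*} {κ : W → W → Prop} {lam : Z → Z → Prop} {f : W → Z}

lemma DShyOn.dconn_inter_preimage_pair {S : Set W} {T : Set Z} (hf : DShyOn κ lam f S T)
    {z₀ z₁ : Z} (hl : lam z₀ z₁) : DConn κ (S ∩ f ⁻¹' {z₀, z₁}) := by
  obtain ⟨hmaps, -, -, hpt, hpair⟩ := hf
  have hdrop : ∀ z w, z ∉ T → S ∩ f ⁻¹' {z, w} = S ∩ f ⁻¹' {w} := by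
    intro z w hz
    ext x
    refine ⟨fun ⟨hx, hfx⟩ => ⟨hx, hfx.resolve_left fun h => hz (h ▸ hmaps x hx)⟩,
      fun ⟨hx, hfx⟩ => ⟨hx, .inr hfx⟩⟩
  by_cases h₀ : z₀ ∈ T
  · by_cases h₁ : z₁ ∈ T
    · exact hpair z₀ z₁ h₀ h₁ hl
    · rw [pair_comm, hdrop z₁ z₀ h₁]
      exact hpt z₀
  · rw [hdrop z₀ z₁ h₀]
    exact hpt z₁

variable {A B : Set W} {C D : Set Z} {a₀ : W} {y₀ : Z}

lemma IsWedge.dshyOn_univ (hκs : Symmetric κ) (hls : Symmetric lam) (hW : IsWedge κ A B a₀)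
    (hW' : IsWedge lam C D y₀) (h₀ : f a₀ = y₀) (hfA : DShyOn κ lam f A C)
    (hfB : DShyOn κ lam f B D) : DShyOn κ lam f univ univ := by
  have hpreimage := fun T : Set Z => dconn_preimage_of_inter (κ := κ) (T := T) hW.union_eq
    hW.mem_left hW.mem_right hW'.inter_eq.subset hfA.1 hfB.1 h₀
  refine ⟨mapsTo_univ f univ,
    fun S _ => dcont_of_forall_adj_mem hκs hfA.2.1 hfB.2.1 (fun _ _ => hW.adj_mem hκs) S,
    hW.union_eq ▸ hW'.union_eq ▸ SurjOn.union_union (f := f) hfA.2.2.1 hfB.2.2.1,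
    fun y => ?_, fun z₀ z₁ _ _ hl => ?_⟩
  · rw [univ_inter]
    refine hpreimage _ ?_ (hfA.2.2.2.1 y) (hfB.2.2.2.1 y)
    simpa only [singleton_subset_iff] using hW'.mem_or_mem y
  · rw [univ_inter]
    refine hpreimage _ ?_ (hfA.dconn_inter_preimage_pair hl) (hfB.dconn_inter_preimage_pair hl)
    simpa only [insert_subset_iff, singleton_subset_iff] using hW'.adj_mem hls hl

lemma IsWedge.dshyOn_of_dshyOn_univ (hκs : Symmetric κ) (hW : IsWedge κ A B a₀)
    (hCD : C ∩ D ⊆ {y₀}) (hA : MapsTo f A C) (hB : MapsTo f B D) (h₀ : f a₀ = y₀)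
    (hf : DShyOn κ lam f univ univ) : DShyOn κ lam f A C := by
  obtain ⟨-, hcont, hsurj, hpt, hpair⟩ := hf
  refine ⟨hA, fun S _ hS => hcont S (subset_univ S) hS,
    surjOn_of_surjOn_univ hW.union_eq hW.mem_left hCD hB h₀ hsurj,
    fun y => hW.dconn_inter hκs ?_, fun z₀ z₁ _ _ hl => hW.dconn_inter hκs ?_⟩
  · simpa only [univ_inter] using hpt y
  · simpa only [univ_inter] using hpair z₀ z₁ trivial trivial hl

end Shy

theorem wedge_shy_iff_general {W Z : Type*}
    (κ : W → W → Prop) (lam : Z → Z → Prop)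
    (hκs : Symmetric κ)
    (hls : Symmetric lam)
    (A B : Set W) (C D : Set Z) (a₀ : W) (y₀ : Z)
    (hABu : A ∪ B = Set.univ) (hABi : A ∩ B = {a₀})
    (hCDu : C ∪ D = Set.univ) (hCDi : C ∩ D = {y₀})
    (hwedgeW : ∀ x ∈ A, ∀ y ∈ B, κ x y → x = a₀ ∨ y = a₀)
    (hwedgeZ : ∀ c ∈ C, ∀ d ∈ D, lam c d → c = y₀ ∨ d = y₀)
    (h : W → Z) (hA : ∀ a ∈ A, h a ∈ C) (hB : ∀ b ∈ B, h b ∈ D)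
    (h0 : h a₀ = y₀) :
    (DShyOn κ lam h A C ∧ DShyOn κ lam h B D) ↔
      DShyOn κ lam h Set.univ Set.univ := by
  have hW : IsWedge κ A B a₀ := ⟨hABu, hABi, hwedgeW⟩
  have hW' : IsWedge lam C D y₀ := ⟨hCDu, hCDi, hwedgeZ⟩
  constructor
  · rintro ⟨hfA, hfB⟩
    exact hW.dshyOn_univ hκs hls hW' h0 hfA hfB
  · intro hf
    exact ⟨hW.dshyOn_of_dshyOn_univ hκs hCDi.subset hA hB h0 hf,
      (hW.symm hκs).dshyOn_of_dshyOn_univ hκs (inter_comm C D ▸ hCDi).subset hB hA h0 hf⟩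

theorem wedge_shy_iff {W Z : Type*}
    (κ : W → W → Prop) (lam : Z → Z → Prop)
    (hκs : Symmetric κ) (hκi : Irreflexive κ)
    (hls : Symmetric lam) (hli : Irreflexive lam)
    (A B : Set W) (C D : Set Z) (a₀ : W) (y₀ : Z)
    (hABu : A ∪ B = Set.univ) (hABi : A ∩ B = {a₀})
    (hCDu : C ∪ D = Set.univ) (hCDi : C ∩ D = {y₀})
    (hwedgeW : ∀ x ∈ A, ∀ y ∈ B, κ x y → x = a₀ ∨ y = a₀)
    (hwedgeZ : ∀ c ∈ C, ∀ d ∈ D, lam c d → c = y₀ ∨ d = y₀)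
    (h : W → Z) (hA : ∀ a ∈ A, h a ∈ C) (hB : ∀ b ∈ B, h b ∈ D)
    (h0 : h a₀ = y₀) :
    (DShyOn κ lam h A C ∧ DShyOn κ lam h B D) ↔
      DShyOn κ lam h Set.univ Set.univ :=
  wedge_shy_iff_general κ lam hκs hls A B C D a₀ y₀ hABu hABi hCDu hCDi hwedgeW hwedgeZ h hA hB h0
end

section
/- Let X and Y be connected subsets of (ℤ, c₁) and f: X → Y a continuous surjection. Then f is shy if and only if f is monotone non-decreasing or monotone non-increasing. -/
/-- The `c₁`-adjacency on ℤ. -/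
def c1 : ℤ → ℤ → Prop := fun a b => |a - b| = 1

/-!
On a digital interval, connected sets are exactly the order-convex ones, so continuity says that
`f` maps intervals onto intervals and shyness adds that its fibres are intervals. A function
that is neither monotone nor antitone has a dent `a < b < c` with `f b` strictly above (or
below) both `f a` and `f c`; a value `v` strictly between is then taken on both `[a, b]` and
`[b, c]`, and convexity of the fibre of `v` forces `f b = v`. Conversely, preimages of intervals
under monotone or antitone maps are intervals.
-/

open Set Interval

theorem monotone_or_antitone_of_ordConnected {α β : Type*} [LinearOrder α] [LinearOrder β]
    {f : α → β} (himg : ∀ a b, (f '' Icc a b).OrdConnected)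
    (hfib : ∀ y, (f ⁻¹' {y}).OrdConnected) : Monotone f ∨ Antitone f := by
  have key : ∀ {a b c : α} {v : β}, a ≤ b → b ≤ c →
      v ∈ [[f a, f b]] → v ∈ [[f b, f c]] → f b = v := by
    intro a b c v hab hbc hvab hvbc
    obtain ⟨a', ha', rfl⟩ := (himg a b).uIcc_subset (mem_image_of_mem f (left_mem_Icc.2 hab))
      (mem_image_of_mem f (right_mem_Icc.2 hab)) hvab
    obtain ⟨c', hc', hc'a'⟩ := (himg b c).uIcc_subset (mem_image_of_mem f (left_mem_Icc.2 hbc))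
      (mem_image_of_mem f (right_mem_Icc.2 hbc)) hvbc
    exact (hfib (f a')).out rfl hc'a' ⟨ha'.2, hc'.1⟩
  by_contra h
  obtain ⟨a, b, c, hab, hbc, hdent⟩ := not_monotone_not_antitone_iff_exists_lt_lt.1 (not_or.1 h)
  rcases hdent with ⟨hab', hcb'⟩ | ⟨hba', hbc'⟩
  · have hv := max_lt hab' hcb'
    exact hv.ne' <| key hab.le hbc.le (mem_uIcc.2 <| .inl ⟨le_max_left _ _, hv.le⟩)
      (mem_uIcc.2 <| .inr ⟨le_max_right _ _, hv.le⟩)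
  · have hv := lt_min hba' hbc'
    exact hv.ne <| key hab.le hbc.le (mem_uIcc.2 <| .inr ⟨hv.le, min_le_left _ _⟩)
      (mem_uIcc.2 <| .inl ⟨hv.le, min_le_right _ _⟩)

theorem Set.OrdConnected.of_image_val {α : Type*} [Preorder α] {S : Set α} {A : Set S}
    (h : (Subtype.val '' A).OrdConnected) : A.OrdConnected :=
  Subtype.val_injective.preimage_image A ▸ h.preimage_mono (Subtype.mono_coe _)

theorem Set.OrdConnected.image_val {α : Type*} [Preorder α] {S : Set α} (hS : S.OrdConnected)
    {A : Set S} (hA : A.OrdConnected) : (Subtype.val '' A).OrdConnected := by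
  refine ⟨?_⟩
  rintro _ ⟨x, hx, rfl⟩ _ ⟨y, hy, rfl⟩ z hz
  exact ⟨⟨z, hS.out x.2 y.2 hz⟩, hA.out hx hy hz, rfl⟩

theorem dConn_induced_iff {α β : Type*} {κ : β → β → Prop} {g : α → β} (hg : g.Injective)
    {A : Set α} : DConn (fun a b => κ (g a) (g b)) A ↔ DConn κ (g '' A) := by
  constructor
  · rintro h _ ⟨a, ha, rfl⟩ _ ⟨b, hb, rfl⟩
    exact (h a ha b hb).lift g fun u v ⟨huv, hu, hv⟩ =>
      ⟨huv, mem_image_of_mem g hu, mem_image_of_mem g hv⟩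
  · intro h a ha b hb
    suffices ∀ {y}, Relation.ReflTransGen (fun u v => κ u v ∧ u ∈ g '' A ∧ v ∈ g '' A) (g a) y →
        ∀ b ∈ A, g b = y →
          Relation.ReflTransGen (fun u v => κ (g u) (g v) ∧ u ∈ A ∧ v ∈ A) a b from
      this (h _ (mem_image_of_mem g ha) _ (mem_image_of_mem g hb)) b hb rfl
    intro y hy
    induction hy with
    | refl => intro b _ hb; rw [hg hb]
    | tail _ hstep ih =>
      rintro b hb rfl
      obtain ⟨huv, ⟨c, hc, rfl⟩, -⟩ := hstep
      exact (ih c hc rfl).tail ⟨huv, hc, hb⟩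

theorem c1_iff {a b : ℤ} : c1 a b ↔ a - b = 1 ∨ a - b = -1 :=
  abs_eq zero_le_one

theorem dConn_c1_iff_ordConnected {A : Set ℤ} : DConn c1 A ↔ A.OrdConnected := by
  constructor
  · intro h
    refine ordConnected_iff_uIcc_subset.2 fun a ha b hb => ?_
    induction h a ha b hb with
    | refl => simpa using ha
    | @tail c d _ hstep ih =>
      obtain ⟨hcd, hc, hd⟩ := hstep
      -- `[[a, d]] ⊆ [[a, c]] ∪ {d}` because `d` is adjacent to `c`
      intro z hz
      by_cases hzd : z = d
      · exact hzd ▸ hd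
      · rw [mem_uIcc] at hz
        exact ih hc (mem_uIcc.2 (by rcases c1_iff.1 hcd with h | h <;> omega))
  · intro h a ha b hb
    have hmem : ∀ i, min a b ≤ i → i < max a b → i ∈ A ∧ i + 1 ∈ A := fun i h1 h2 =>
      ⟨h.uIcc_subset ha hb ⟨h1, h2.le⟩, h.uIcc_subset ha hb ⟨by omega, by omega⟩⟩
    refine reflTransGen_of_succ _ (fun i hi => ?_) (fun i hi => ?_) <;>
      rw [Order.succ_eq_add_one] <;> rw [mem_Ico] at hi
    · obtain ⟨hi₀, hi₁⟩ := hmem i (by omega) (by omega)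
      exact ⟨c1_iff.2 (by omega), hi₀, hi₁⟩
    · obtain ⟨hi₀, hi₁⟩ := hmem i (by omega) (by omega)
      exact ⟨c1_iff.2 (by omega), hi₁, hi₀⟩

theorem ordConnected_pair_of_c1 {a b : ℤ} (h : c1 a b) : ({a, b} : Set ℤ).OrdConnected := by
  refine ordConnected_iff.2 fun x hx y hy _ z hz => ?_
  simp only [mem_insert_iff, mem_singleton_iff, mem_Icc] at hx hy hz ⊢
  rcases c1_iff.1 h with h | h <;> omega

section Subtype

variable {S : Set ℤ} {A : Set S}

theorem dConn_subtype_iff :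
    DConn (fun a b : S => c1 a.1 b.1) A ↔ (Subtype.val '' A).OrdConnected :=
  (dConn_induced_iff Subtype.val_injective).trans dConn_c1_iff_ordConnected

theorem ordConnected_of_dConn_subtype (h : DConn (fun a b : S => c1 a.1 b.1) A) :
    A.OrdConnected :=
  .of_image_val (dConn_subtype_iff.1 h)

theorem dConn_subtype_of_ordConnected (hS : S.OrdConnected) (hA : A.OrdConnected) :
    DConn (fun a b : S => c1 a.1 b.1) A :=
  dConn_subtype_iff.2 (hS.image_val hA)

end Subtype

theorem shy_into_Z_iff_monotone_general (X Y : Set ℤ)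
    (hX : DConn c1 X)
    (f : X → Y)
    (hcont : DCont (fun a b : X => c1 a.1 b.1) (fun a b : Y => c1 a.1 b.1) f)
    (hsurj : Function.Surjective f) :
    DShy (fun a b : X => c1 a.1 b.1) (fun a b : Y => c1 a.1 b.1) f ↔
      (Monotone f ∨ Antitone f) := by
  have hXo : X.OrdConnected := dConn_c1_iff_ordConnected.1 hX
  constructor
  · rintro ⟨-, -, hfib, -⟩
    exact monotone_or_antitone_of_ordConnected
      (fun a b => ordConnected_of_dConn_subtype (hcont _ (dConn_subtype_of_ordConnected hXo
        ordConnected_Icc)))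
      (fun y => ordConnected_of_dConn_subtype (hfib y))
  · intro hf
    have hpre : ∀ T : Set Y, T.OrdConnected → DConn (fun a b : X => c1 a.1 b.1) (f ⁻¹' T) :=
      fun T hT => dConn_subtype_of_ordConnected hXo (hf.elim hT.preimage_mono hT.preimage_anti)
    refine ⟨hcont, hsurj, fun y => hpre _ ordConnected_singleton, fun y₀ y₁ hy => hpre _ ?_⟩
    exact .of_image_val (by rw [image_pair]; exact ordConnected_pair_of_c1 hy)

theorem shy_into_Z_iff_monotone (X Y : Set ℤ)
    (hX : DConn c1 X) (hY : DConn c1 Y)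
    (f : X → Y)
    (hcont : DCont (fun a b : X => c1 a.1 b.1) (fun a b : Y => c1 a.1 b.1) f)
    (hsurj : Function.Surjective f) :
    DShy (fun a b : X => c1 a.1 b.1) (fun a b : Y => c1 a.1 b.1) f ↔
      (Monotone f ∨ Antitone f) :=
  shy_into_Z_iff_monotone_general X Y hX f hcont hsurj
end

section
/- Let S be a digital simple closed curve and f: S → Y ⊆ (ℤ, c₁) a shy map. Then Y is a singleton {z} or a doubleton {z, z+1} for some integer z. -/
/-!
The image of the whole cycle is a connected subset of `(ℤ, c₁)`, hence an interval `Y`. If `Y`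
contained `z` and `z + 2`, the fibre of `z + 1` would be connected, hence (on a cycle) so would be
its complement, and the image of that complement would again be an interval. But it contains `z`
and `z + 2` and misses `z + 1`. So `Y` is an interval with at most two points.
-/

open Relation

theorem Relation.ReflTransGen.exists_apply_eq_of_mem_Icc {α : Type*} {R : α → α → Prop}
    {g : α → ℤ} (hg : ∀ u v, R u v → g v ≤ g u + 1) {a b : α} (hab : ReflTransGen R a b)
    {w : ℤ} (hw : w ∈ Set.Icc (g a) (g b)) : ∃ x, ReflTransGen R a x ∧ g x = w := by
  induction hab with
  | refl => exact ⟨a, .refl, le_antisymm hw.1 hw.2⟩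
  | @tail p q hap hpq ih =>
    by_cases hwp : w ≤ g p
    · exact ih ⟨hw.1, hwp⟩
    · exact ⟨q, hap.tail hpq, by linarith [hg p q hpq, hw.2]⟩

theorem DConn.ordConnected_image {α : Type*} {κ : α → α → Prop} {A : Set α} (hA : DConn κ A)
    {g : α → ℤ} (hg : ∀ u ∈ A, ∀ v ∈ A, κ u v → g v ≤ g u + 1) : (g '' A).OrdConnected := by
  refine ⟨?_⟩
  rintro _ ⟨a, ha, rfl⟩ _ ⟨b, hb, rfl⟩ w hw
  obtain ⟨x, hax, rfl⟩ := (hA a ha b hb).exists_apply_eq_of_mem_Icc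
    (fun u v ⟨huv, hu, hv⟩ => hg u hu v hv huv) hw
  rcases hax.cases_tail with rfl | ⟨_, -, -, -, hx⟩
  exacts [⟨x, ha, rfl⟩, ⟨x, hx, rfl⟩]

theorem Int.eq_singleton_or_eq_pair_of_ordConnected {Y : Set ℤ} (hY : Y.OrdConnected)
    (hne : Y.Nonempty) (h2 : ∀ z ∈ Y, z + 2 ∉ Y) : (∃ z, Y = {z}) ∨ ∃ z, Y = {z, z + 1} := by
  have hdiam : ∀ u ∈ Y, ∀ v ∈ Y, v ≤ u + 1 := fun u hu v hv => by
    by_contra h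
    exact h2 u hu (hY.out hu hv ⟨by omega, by omega⟩)
  obtain ⟨y, hy⟩ := hne
  obtain ⟨z, hz, hmin⟩ := Int.exists_least_of_bdd
    ⟨y - 1, fun u hu => by linarith [hdiam u hu y hy]⟩ ⟨y, hy⟩
  have hsub : ∀ u ∈ Y, u = z ∨ u = z + 1 := fun u hu => by
    have := hmin u hu
    have := hdiam z hz u hu
    omega
  by_cases hz1 : z + 1 ∈ Y
  · exact .inr ⟨z, Set.Subset.antisymm hsub
      (Set.insert_subset hz (Set.singleton_subset_iff.2 hz1))⟩
  · refine .inl ⟨z, Set.Subset.antisymm (fun u hu => ?_) (Set.singleton_subset_iff.2 hz)⟩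
    exact (hsub u hu).resolve_right (by rintro rfl; exact hz1 hu)

def cycleAdj (m : ℕ) (i j : ZMod m) : Prop := j = i + 1 ∨ i = j + 1

section Cycle

variable {m : ℕ}

theorem reflTransGen_cycleAdj_add_natCast {B : Set (ZMod m)} {a : ZMod m} {n : ℕ}
    (h : ∀ t ≤ n, a + t ∈ B) :
    ReflTransGen (fun u v => cycleAdj m u v ∧ u ∈ B ∧ v ∈ B) a (a + n) := by
  induction n with
  | zero => simpa using ReflTransGen.refl
  | succ n ih =>
    exact (ih fun t ht => h t (by omega)).tail
      ⟨.inl (by push_cast; ring), h n (by omega), h (n + 1) le_rfl⟩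

theorem ZMod.val_sub_le_of_cycleAdj [NeZero m] {a u v : ZMod m} (huv : cycleAdj m u v)
    (hu : u ≠ a) : (v - a).val ≤ (u - a).val + 1 := by
  have hone : (1 : ZMod m).val ≤ 1 := ZMod.val_one_eq_one_mod m ▸ Nat.mod_le 1 m
  rcases huv with rfl | rfl
  · calc (u + 1 - a).val = (u - a + 1).val := by rw [sub_add_eq_add_sub]
      _ ≤ (u - a).val + (1 : ZMod m).val := ZMod.val_add_le _ _
      _ ≤ (u - a).val + 1 := by omega
  · have hpos : 0 < (v + 1 - a).val := ZMod.val_pos.2 (sub_ne_zero.2 hu)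
    rw [show v - a = v + 1 - a - 1 by ring, ZMod.val_sub (by omega)]
    omega

theorem DConn.compl_cycleAdj [NeZero m] {A : Set (ZMod m)} (hA : DConn (cycleAdj m) A) :
    DConn (cycleAdj m) Aᶜ := by
  intro a ha b hb
  set k := (b - a).val
  have hkm : k < m := ZMod.val_lt _
  have hak : a + k = b := by simp [k]
  by_cases hfwd : ∀ t ≤ k, a + t ∈ Aᶜ
  · exact hak ▸ reflTransGen_cycleAdj_add_natCast hfwd
  have hbk : b + ((m - k : ℕ) : ZMod m) = a := by
    rw [← hak, Nat.cast_sub hkm.le, ZMod.natCast_self]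
    ring
  -- Otherwise `A` meets the arc from `a` to `b`; it cannot also meet the arc from `b` back to
  -- `a`, since a path in `A` joining the two would have to pass through `b`.
  have hback : ∀ s ≤ m - k, b + s ∈ Aᶜ := by
    obtain ⟨t, htk, htA⟩ : ∃ t ≤ k, a + t ∈ A := by simpa using hfwd
    intro s hs hsA
    have ht : t ≠ k := by rintro rfl; exact hb (hak ▸ htA)
    have hs0 : s ≠ 0 := by rintro rfl; exact hb (by simpa using hsA)
    have hsm : s ≠ m - k := by rintro rfl; exact ha (hbk ▸ hsA)
    have hcross := hA.ordConnected_image (g := fun x => ((x - a).val : ℤ))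
      fun u hu v _ huv => by
        exact_mod_cast ZMod.val_sub_le_of_cycleAdj huv (by rintro rfl; exact ha hu)
    have hgt : ((a + t - a).val : ℤ) = t := by
      rw [add_sub_cancel_left, ZMod.val_cast_of_lt (by omega)]
    have hgs : ((b + s - a).val : ℤ) = k + s := by
      rw [← hak, add_assoc, add_sub_cancel_left, ← Nat.cast_add, ZMod.val_cast_of_lt (by omega)]
      push_cast
      rfl
    obtain ⟨x, hxA, hx⟩ := hcross.out ⟨_, htA, rfl⟩ ⟨_, hsA, rfl⟩
      (show (k : ℤ) ∈ Set.Icc ((a + t - a).val : ℤ) ((b + s - a).val) by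
        rw [hgt, hgs]; constructor <;> omega)
    have : x - a = b - a := ZMod.val_injective m (Nat.cast_injective hx)
    exact hb (sub_left_inj.1 this ▸ hxA)
  have : Std.Symm (fun u v => cycleAdj m u v ∧ u ∈ Aᶜ ∧ v ∈ Aᶜ) :=
    ⟨fun _ _ ⟨huv, hu, hv⟩ => ⟨huv.symm, hv, hu⟩⟩
  exact Std.Symm.symm _ _ (hbk ▸ reflTransGen_cycleAdj_add_natCast hback)

end Cycle

theorem shy_from_simple_closed_curve (m : ℕ) (hm : 4 ≤ m) (Y : Set ℤ)
    (f : ZMod m → Y)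
    (hshy : DShy (fun i j : ZMod m => j = i + 1 ∨ i = j + 1)
      (fun a b : Y => c1 a.1 b.1) f) :
    (∃ z : ℤ, Y = {z}) ∨ (∃ z : ℤ, Y = {z, z + 1}) := by
  have : NeZero m := ⟨by omega⟩
  obtain ⟨hcont, hsurj, hfiber, -⟩ := hshy
  have hinterval : ∀ T : Set Y, DConn (fun a b : Y => c1 a.1 b.1) T →
      (Subtype.val '' T).OrdConnected := fun T hT =>
    hT.ordConnected_image fun u _ v _ huv => by linarith [(abs_le.1 (le_of_eq huv)).1]
  have hY : Y.OrdConnected := by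
    have huniv : DConn (cycleAdj m) Set.univ := by
      simpa using (show DConn (cycleAdj m) ∅ by simp [DConn]).compl_cycleAdj
    simpa [Set.image_univ_of_surjective hsurj] using hinterval _ (hcont _ huniv)
  refine Int.eq_singleton_or_eq_pair_of_ordConnected hY ⟨_, (f 0).2⟩ fun z hz hz2 => ?_
  have hz1 : z + 1 ∈ Y := hY.out hz hz2 ⟨by omega, by omega⟩
  set B := (f ⁻¹' {⟨z + 1, hz1⟩})ᶜ
  have hB := hinterval _ (hcont B (hfiber _).compl_cycleAdj)
  obtain ⟨x, hx⟩ := hsurj ⟨z, hz⟩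
  obtain ⟨x', hx'⟩ := hsurj ⟨z + 2, hz2⟩
  obtain ⟨_, ⟨y, hyB, rfl⟩, hy⟩ := hB.out ⟨_, ⟨x, by simp [B, hx], hx⟩, rfl⟩
    ⟨_, ⟨x', by simp [B, hx'], hx'⟩, rfl⟩ (show z + 1 ∈ Set.Icc z (z + 2) by
      constructor <;> omega)
  exact hyB (Subtype.ext hy)
end

section
/- Let T be a finite tree (as a graph) with root r, let v₀,…,v_m be the vertices adjacent to r, and let T_i be the subtree consisting of r, v_i, and the descendants of v_i. If f: T → Y ⊆ (ℤ,c₁) is a shy map, then f is constant (with value f(r)) on all but at most two of the subtrees T_i. -/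
/-!
Deleting the edges at the root `r` splits the tree into the branches `T_i ∖ {r}`. For
`d ≠ f r` the fibre `f⁻¹{d}` is connected and misses `r`, so it lies in a single branch.
Since `f` changes by at most one along an edge, a branch on which `f` is not constant
contains a vertex with value `f r + 1` or `f r - 1`; hence at most two branches are not
constant.
-/

theorem DConn.pair_s19 {X : Type*} {κ : X → X → Prop} {u w : X} (huw : κ u w) (hwu : κ w u) :
    DConn κ {u, w} := by
  rintro a (rfl | rfl) b (rfl | rfl)
  · exact .refl
  · exact .single ⟨huw, by simp, by simp⟩
  · exact .single ⟨hwu, by simp, by simp⟩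
  · exact .refl

theorem abs_sub_le_one_of_dConn_pair {a b : ℤ} (h : DConn c1 {a, b}) : |a - b| ≤ 1 := by
  rcases (h a (by simp) b (by simp)).cases_tail with rfl | ⟨x, -, hx, hxA, -⟩
  · simp
  · rcases hxA with rfl | rfl
    · exact hx.le
    · simp [c1] at hx

theorem DShyOn.abs_sub_le_one {X : Type*} {κ : X → X → Prop} {f : X → ℤ} {S : Set X}
    {T : Set ℤ} (hf : DShyOn κ c1 f S T) {u w : X} (hu : u ∈ S) (hw : w ∈ S)
    (huw : κ u w) (hwu : κ w u) : |f u - f w| ≤ 1 := by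
  have hpair := hf.2.1 {u, w} (Set.insert_subset hu (Set.singleton_subset_iff.mpr hw))
    (DConn.pair_s19 huw hwu)
  rw [Set.image_pair] at hpair
  exact abs_sub_le_one_of_dConn_pair hpair

/-- A discrete intermediate value theorem. -/
theorem exists_reflTransGen_abs_sub_eq_one {α : Type*} {R : α → α → Prop} {f : α → ℤ}
    {c : ℤ} {a b : α} (hab : Relation.ReflTransGen R a b)
    (hf : ∀ x y, R x y → |f x - f y| ≤ 1) (ha : |f a - c| ≤ 1) (hb : f b ≠ c) :
    ∃ z, Relation.ReflTransGen R a z ∧ |f z - c| = 1 := by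
  induction hab with
  | refl => exact ⟨a, .refl, le_antisymm ha (Int.one_le_abs (sub_ne_zero.mpr hb))⟩
  | @tail y b hay hyb ih =>
    by_cases hy : f y = c
    · refine ⟨b, hay.tail hyb, le_antisymm ?_ (Int.one_le_abs (sub_ne_zero.mpr hb))⟩
      rw [← hy, abs_sub_comm]
      exact hf y b hyb
    · exact ih hy

theorem DConn.reachable_deleteIncidenceSet {V : Type*} {G : SimpleGraph V} {r : V} {A : Set V}
    (hA : DConn G.Adj A) (hr : r ∉ A) {a b : V} (ha : a ∈ A) (hb : b ∈ A) :
    (G.deleteIncidenceSet r).Reachable a b := by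
  rw [SimpleGraph.reachable_iff_reflTransGen]
  refine Relation.ReflTransGen.mono ?_ _ _ (hA a ha b hb)
  rintro x y ⟨hxy, hx, hy⟩
  refine SimpleGraph.deleteIncidenceSet_adj.mpr ⟨hxy, ?_, ?_⟩ <;> rintro rfl <;> contradiction

namespace SimpleGraph

variable {V : Type*} {G : SimpleGraph V} {r : V}

theorem reachable_deleteIncidenceSet_iff {v w : V} :
    (G.deleteIncidenceSet r).Reachable v w ↔
      Relation.ReflTransGen (fun a b => G.Adj a b ∧ a ≠ r ∧ b ≠ r) v w := by
  rw [reachable_iff_reflTransGen]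
  congr! with a b
  exact deleteIncidenceSet_adj

/-- Otherwise `s(r, v)` would not be a bridge: the route through `v'` avoids it. -/
theorem IsAcyclic.not_reachable_deleteIncidenceSet (hG : G.IsAcyclic) {v v' : V}
    (hv : G.Adj r v) (hv' : G.Adj r v') (hne : v ≠ v') :
    ¬ (G.deleteIncidenceSet r).Reachable v v' := by
  intro hvv'
  refine isBridge_iff.mp (isAcyclic_iff_forall_adj_isBridge.mp hG hv) ?_
  have hle : G.deleteIncidenceSet r ≤ G.deleteEdges {s(r, v)} := fun x y hxy => by
    obtain ⟨hxy, hx, hy⟩ := deleteIncidenceSet_adj.mp hxy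
    simp [hxy, hx, hy]
  have hrv' : (G.deleteEdges {s(r, v)}).Adj r v' := by simp [hv', hne.symm, hv.ne]
  exact hrv'.reachable.trans (hvv'.mono hle).symm

theorem IsAcyclic.exists_forall_eq_of_dConn (hG : G.IsAcyclic) {A : Set V}
    (hA : DConn G.Adj A) (hr : r ∉ A) :
    ∃ v₀, ∀ v, G.Adj r v → ∀ z ∈ A, (G.deleteIncidenceSet r).Reachable v z → v = v₀ := by
  by_cases hmeet : ∃ v₀, G.Adj r v₀ ∧ ∃ z₀ ∈ A, (G.deleteIncidenceSet r).Reachable v₀ z₀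
  · obtain ⟨v₀, hv₀, z₀, hz₀, hv₀z₀⟩ := hmeet
    refine ⟨v₀, fun v hv z hz hvz => ?_⟩
    by_contra hne
    exact hG.not_reachable_deleteIncidenceSet hv hv₀ hne
      (hvz.trans ((hA.reachable_deleteIncidenceSet hr hz hz₀).trans hv₀z₀.symm))
  · exact ⟨r, fun v hv z hz hvz => (hmeet ⟨v, hv, z, hz, hvz⟩).elim⟩

end SimpleGraph

theorem shy_on_tree_constant_off_two_subtrees_general {V : Type*}
    (G : SimpleGraph V) (hT : G.IsTree) (r : V)
    (Y : Set ℤ) (f : V → ℤ)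
    (hshy : DShyOn G.Adj c1 f Set.univ Y) :
    ∃ v₁ v₂ : V, ∀ v : V, G.Adj r v → v ≠ v₁ → v ≠ v₂ →
      ∀ x ∈ insert r {w : V | w ≠ r ∧
        Relation.ReflTransGen (fun a b => G.Adj a b ∧ a ≠ r ∧ b ≠ r) v w},
      f x = f r := by
  have lip {u w : V} (h : G.Adj u w) : |f u - f w| ≤ 1 :=
    hshy.abs_sub_le_one trivial trivial h h.symm
  have branch (d : ℤ) (hd : d ≠ f r) : ∃ v₀, ∀ v, G.Adj r v → ∀ z, f z = d →
      (G.deleteIncidenceSet r).Reachable v z → v = v₀ := by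
    obtain ⟨v₀, hv₀⟩ := hT.isAcyclic.exists_forall_eq_of_dConn (hshy.2.2.2.1 d)
      (fun h => hd h.2.symm)
    exact ⟨v₀, fun v hv z hz => hv₀ v hv z ⟨trivial, hz⟩⟩
  obtain ⟨v₁, h₁⟩ := branch (f r + 1) (by omega)
  obtain ⟨v₂, h₂⟩ := branch (f r - 1) (by omega)
  refine ⟨v₁, v₂, fun v hv hv₁ hv₂ x hx => ?_⟩
  rcases hx with rfl | ⟨-, hvx⟩
  · rfl
  by_contra hfx
  obtain ⟨z, hvz, hz⟩ :=
    exists_reflTransGen_abs_sub_eq_one hvx (fun a b hab => lip hab.1) (lip hv.symm) hfx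
  replace hvz := SimpleGraph.reachable_deleteIncidenceSet_iff.mpr hvz
  rcases abs_eq zero_le_one |>.mp hz with hz | hz
  · exact hv₁ (h₁ v hv z (by omega) hvz)
  · exact hv₂ (h₂ v hv z (by omega) hvz)

theorem shy_on_tree_constant_off_two_subtrees {V : Type*} [Fintype V]
    (G : SimpleGraph V) (hT : G.IsTree) (r : V)
    (Y : Set ℤ) (f : V → ℤ)
    (hshy : DShyOn G.Adj c1 f Set.univ Y) :
    ∃ v₁ v₂ : V, ∀ v : V, G.Adj r v → v ≠ v₁ → v ≠ v₂ →
      ∀ x ∈ insert r {w : V | w ≠ r ∧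
        Relation.ReflTransGen (fun a b => G.Adj a b ∧ a ≠ r ∧ b ≠ r) v w},
      f x = f r :=
  shy_on_tree_constant_off_two_subtrees_general G hT r Y f hshy
end
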